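/- Let Y be a real m×n matrix with singular value decomposition Y = UΣVᵀ, and λ > 0. Then X̂ = U·soft(Σ;λ)·Vᵀ, obtained by applying the soft threshold soft(σ;λ) = max(σ-λ,0) to each singular value, is a global minimizer of X ↦ (1/2)‖Y-X‖_F² + λ‖X‖_*, where ‖X‖_* is the nuclear norm (sum of singular values). -/

import Mathlib

/-!
The matrix `G = Y - X̂ = U (Σ - soft(Σ; λ)) Vᵀ` is a dual certificate for `X̂`. Its entries
`σ - soft(σ; λ)` lie in `[0, λ]`, so `G` has operator norm at most `λ`, and therefore
`⟨G, X⟩ ≤ λ ‖X‖_*` for every `X` (compute the trace in an orthonormal eigenbasis of `XᵀX` and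
apply Cauchy–Schwarz to each term). On the other hand `(σ - soft(σ; λ)) soft(σ; λ) = λ soft(σ; λ)`
gives `⟨G, X̂⟩ = λ ‖X̂‖_*`. Expanding `‖Y - X‖² = ‖G‖² + 2 ⟨G, X̂ - X⟩ + ‖X̂ - X‖²` yields the
claim.
-/

open Matrix

/-- Singular values of a real rectangular matrix: square roots of the
eigenvalues of `Aᵀ * A` (the nuclear norm, their sum, is order-independent). -/
noncomputable def svals {m n : ℕ} (A : Matrix (Fin m) (Fin n) ℝ) : Fin n → ℝ :=
  fun i => Real.sqrt ((show (Aᵀ * A).IsHermitian from Matrix.isHermitian_conjTranspose_mul_self A).eigenvalues i)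

/-- Nuclear norm: sum of singular values. -/
noncomputable def nuclearNorm {m n : ℕ} (A : Matrix (Fin m) (Fin n) ℝ) : ℝ :=
  ∑ i, svals A i

open Finset

theorem sq_sum_eq_sum_sq_of_mul_eq_zero {ι R : Type*} [Fintype ι] [CommSemiring R] (f : ι → R)
    (hf : ∀ i k, i ≠ k → f i * f k = 0) : (∑ i, f i) ^ 2 = ∑ i, f i ^ 2 := by
  rw [sq, sum_mul_sum]
  refine sum_congr rfl fun i _ => ?_
  rw [sum_eq_single i (fun k _ hk => hf i k hk.symm) (by simp), sq]

section Trace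

variable {m n R : Type*} [Fintype m] [Fintype n] [CommSemiring R]

theorem sum_sum_mul_eq_trace_transpose_mul (A B : Matrix m n R) :
    ∑ i, ∑ j, A i j * B i j = trace (Aᵀ * B) := by
  rw [← trace_mul_comm, ← sum_hadamard_eq, hadamard_comm]
  rfl

theorem trace_transpose_mul_eq_sum_dotProduct [DecidableEq n] {W : Matrix n n R} (hW : W * Wᵀ = 1)
    (A B : Matrix m n R) : trace (Aᵀ * B) = ∑ j, (A *ᵥ Wᵀ j) ⬝ᵥ (B *ᵥ Wᵀ j) :=
  calc trace (Aᵀ * B) = trace (Wᵀ * (Aᵀ * B) * W) := by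
        rw [trace_mul_cycle, ← Matrix.mul_assoc, hW, Matrix.one_mul]
    _ = trace ((A * W)ᵀ * (B * W)) := by simp only [transpose_mul, Matrix.mul_assoc]
    _ = ∑ j, (A *ᵥ Wᵀ j) ⬝ᵥ (B *ᵥ Wᵀ j) := rfl

theorem transpose_mul_orthogonal_conj [DecidableEq m] {U : Matrix m m R} (hU : Uᵀ * U = 1)
    (V : Matrix n n R) (A B : Matrix m n R) :
    (U * A * Vᵀ)ᵀ * (U * B * Vᵀ) = V * (Aᵀ * B) * Vᵀ := by
  simp only [transpose_mul, transpose_transpose, Matrix.mul_assoc]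
  rw [← Matrix.mul_assoc Uᵀ, hU, Matrix.one_mul]

theorem trace_transpose_mul_orthogonal_conj [DecidableEq m] [DecidableEq n] {U : Matrix m m R}
    {V : Matrix n n R} (hU : Uᵀ * U = 1) (hV : Vᵀ * V = 1) (A B : Matrix m n R) :
    trace ((U * A * Vᵀ)ᵀ * (U * B * Vᵀ)) = trace (Aᵀ * B) := by
  rw [transpose_mul_orthogonal_conj hU, trace_mul_cycle, ← Matrix.mul_assoc, hV, Matrix.one_mul]

end Trace

section DotProduct

variable {m n : Type*} [Fintype m] [Fintype n]

theorem dotProduct_le_sqrt_mul_sqrt (a b : n → ℝ) :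
    a ⬝ᵥ b ≤ √(a ⬝ᵥ a) * √(b ⬝ᵥ b) := by
  simpa only [dotProduct, sq] using Real.sum_mul_le_sqrt_mul_sqrt univ a b

theorem mulVec_dotProduct_mulVec_self (A : Matrix m n ℝ) (v : n → ℝ) :
    (A *ᵥ v) ⬝ᵥ (A *ᵥ v) = v ⬝ᵥ ((Aᵀ * A) *ᵥ v) := by
  rw [← mulVec_mulVec, dotProduct_mulVec, mulVec_transpose, dotProduct_comm]

theorem mulVec_dotProduct_mulVec_self_of_transpose_mul_self_eq_one [DecidableEq n]
    {A : Matrix m n ℝ} (hA : Aᵀ * A = 1) (v : n → ℝ) : (A *ᵥ v) ⬝ᵥ (A *ᵥ v) = v ⬝ᵥ v := by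
  rw [mulVec_dotProduct_mulVec_self, hA, one_mulVec]

theorem mulVec_dotProduct_mulVec_self_le [DecidableEq n] {A : Matrix m n ℝ} {d : n → ℝ}
    {c : ℝ} (hA : Aᵀ * A = diagonal d) (hd : ∀ j, d j ≤ c) (v : n → ℝ) :
    (A *ᵥ v) ⬝ᵥ (A *ᵥ v) ≤ c * (v ⬝ᵥ v) := by
  rw [mulVec_dotProduct_mulVec_self, hA, dotProduct, dotProduct, mul_sum]
  refine sum_le_sum fun j _ => ?_
  rw [mulVec_diagonal]
  nlinarith [hd j, mul_self_nonneg (v j)]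

theorem mulVec_dotProduct_mulVec_self_orthogonal_conj_le [DecidableEq m] [DecidableEq n]
    {U : Matrix m m ℝ} {V : Matrix n n ℝ} (hU : Uᵀ * U = 1) (hV : Vᵀ * V = 1)
    {A : Matrix m n ℝ} {c : ℝ} (hA : ∀ v, (A *ᵥ v) ⬝ᵥ (A *ᵥ v) ≤ c * (v ⬝ᵥ v)) (v : n → ℝ) :
    ((U * A * Vᵀ) *ᵥ v) ⬝ᵥ ((U * A * Vᵀ) *ᵥ v) ≤ c * (v ⬝ᵥ v) := by
  have hVt : Vᵀᵀ * Vᵀ = 1 := by rw [transpose_transpose]; exact mul_eq_one_comm.mp hV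
  rw [← mulVec_mulVec, ← mulVec_mulVec,
    mulVec_dotProduct_mulVec_self_of_transpose_mul_self_eq_one hU,
    ← mulVec_dotProduct_mulVec_self_of_transpose_mul_self_eq_one hVt v]
  exact hA _

end DotProduct

open Polynomial in
theorem sum_eigenvalues_eq_of_charpoly_eq {n : Type*} [Fintype n] [DecidableEq n]
    {A : Matrix n n ℝ} (hA : A.IsHermitian) {d : n → ℝ}
    (h : A.charpoly = ∏ i, (X - C (d i))) (f : ℝ → ℝ) :
    ∑ i, f (hA.eigenvalues i) = ∑ i, f (d i) := by
  have hroots : univ.val.map hA.eigenvalues = univ.val.map d := by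
    have := hA.roots_charpoly_eq_eigenvalues
    rw [h, roots_prod _ _ (prod_ne_zero_iff.mpr fun i _ => X_sub_C_ne_zero (d i))] at this
    simpa using this.symm
  change (univ.val.map (f ∘ hA.eigenvalues)).sum = (univ.val.map (f ∘ d)).sum
  rw [← Multiset.map_map, hroots, Multiset.map_map]

section NuclearNorm

variable {m n : ℕ}

theorem svals_orthogonal_conj {U : Matrix (Fin m) (Fin m) ℝ} {V : Matrix (Fin n) (Fin n) ℝ}
    (hU : Uᵀ * U = 1) (hV : Vᵀ * V = 1) (A : Matrix (Fin m) (Fin n) ℝ) :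
    svals (U * A * Vᵀ) = svals A := by
  have h : ((U * A * Vᵀ)ᵀ * (U * A * Vᵀ)).charpoly = (Aᵀ * A).charpoly := by
    rw [transpose_mul_orthogonal_conj hU, Matrix.mul_assoc, charpoly_mul_comm, Matrix.mul_assoc,
      hV, Matrix.mul_one]
  unfold svals
  rw [(IsHermitian.eigenvalues_eq_eigenvalues_iff _ _).mpr h]

theorem nuclearNorm_orthogonal_conj {U : Matrix (Fin m) (Fin m) ℝ} {V : Matrix (Fin n) (Fin n) ℝ}
    (hU : Uᵀ * U = 1) (hV : Vᵀ * V = 1) (A : Matrix (Fin m) (Fin n) ℝ) :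
    nuclearNorm (U * A * Vᵀ) = nuclearNorm A := by
  rw [nuclearNorm, nuclearNorm, svals_orthogonal_conj hU hV]

theorem trace_transpose_mul_le_nuclearNorm {G : Matrix (Fin m) (Fin n) ℝ} {c : ℝ} (hc : 0 ≤ c)
    (hG : ∀ v, (G *ᵥ v) ⬝ᵥ (G *ᵥ v) ≤ c ^ 2 * (v ⬝ᵥ v)) (X : Matrix (Fin m) (Fin n) ℝ) :
    trace (Gᵀ * X) ≤ c * nuclearNorm X := by
  let hH : (Xᵀ * X).IsHermitian := isHermitian_conjTranspose_mul_self X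
  let W : Matrix (Fin n) (Fin n) ℝ := hH.eigenvectorUnitary
  have hW : W * Wᵀ = 1 := by
    simpa only [star_eq_conjTranspose, conjTranspose_eq_transpose_of_trivial] using
      mem_unitaryGroup_iff.mp hH.eigenvectorUnitary.2
  have hunit (j : Fin n) : Wᵀ j ⬝ᵥ Wᵀ j = 1 := by
    have hWW : Wᵀ * W = 1 := mul_eq_one_comm.mp hW
    have hjj := congrFun (congrFun hWW j) j
    rwa [one_apply_eq] at hjj
  have heig (j : Fin n) : (X *ᵥ Wᵀ j) ⬝ᵥ (X *ᵥ Wᵀ j) = hH.eigenvalues j := by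
    have hvec : (Xᵀ * X) *ᵥ Wᵀ j = hH.eigenvalues j • Wᵀ j := hH.mulVec_eigenvectorBasis j
    rw [mulVec_dotProduct_mulVec_self, hvec, dotProduct_smul, smul_eq_mul, hunit, mul_one]
  rw [trace_transpose_mul_eq_sum_dotProduct hW, nuclearNorm, mul_sum]
  refine sum_le_sum fun j _ => ?_
  have hGj : √((G *ᵥ Wᵀ j) ⬝ᵥ (G *ᵥ Wᵀ j)) ≤ c := by
    rw [Real.sqrt_le_left hc]
    simpa only [hunit, mul_one] using hG (Wᵀ j)
  calc (G *ᵥ Wᵀ j) ⬝ᵥ (X *ᵥ Wᵀ j)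
      ≤ √((G *ᵥ Wᵀ j) ⬝ᵥ (G *ᵥ Wᵀ j)) * √((X *ᵥ Wᵀ j) ⬝ᵥ (X *ᵥ Wᵀ j)) :=
        dotProduct_le_sqrt_mul_sqrt _ _
    _ ≤ c * svals X j := by rw [heig]; exact mul_le_mul_of_nonneg_right hGj (Real.sqrt_nonneg _)

end NuclearNorm

def IsRectDiagonal {m n : ℕ} {R : Type*} [Zero R] (A : Matrix (Fin m) (Fin n) R) : Prop :=
  ∀ (i : Fin m) (j : Fin n), (i : ℕ) ≠ j → A i j = 0

namespace IsRectDiagonal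

variable {m n : ℕ}

theorem map {R S : Type*} [Zero R] [Zero S] {A : Matrix (Fin m) (Fin n) R}
    (hA : IsRectDiagonal A) {f : R → S} (hf : f 0 = 0) : IsRectDiagonal (A.map f) :=
  fun i j hij => by rw [map_apply, hA i j hij, hf]

theorem sub {R : Type*} [AddGroup R] {A B : Matrix (Fin m) (Fin n) R} (hA : IsRectDiagonal A)
    (hB : IsRectDiagonal B) : IsRectDiagonal (A - B) :=
  fun i j hij => by rw [Matrix.sub_apply, hA i j hij, hB i j hij, sub_zero]

section CommSemiring

variable {R : Type*} [CommSemiring R] {A : Matrix (Fin m) (Fin n) R}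

theorem transpose_mul_self (hA : IsRectDiagonal A) :
    Aᵀ * A = diagonal fun j => ∑ i, A i j ^ 2 := by
  ext j l
  rcases eq_or_ne j l with rfl | hjl
  · simp only [mul_apply, transpose_apply, diagonal_apply_eq, sq]
  · rw [diagonal_apply_ne _ hjl, mul_apply]
    refine sum_eq_zero fun i _ => ?_
    by_cases hij : (i : ℕ) = j
    · rw [transpose_apply, hA i l (fun h => hjl (Fin.ext (hij.symm.trans h))), mul_zero]
    · rw [transpose_apply, hA i j hij, zero_mul]

theorem sq_sum_col (hA : IsRectDiagonal A) (j : Fin n) :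
    (∑ i, A i j) ^ 2 = ∑ i, A i j ^ 2 := by
  refine sq_sum_eq_sum_sq_of_mul_eq_zero _ fun i k hik => ?_
  by_cases hij : (i : ℕ) = j
  · rw [hA k j (fun h => hik (Fin.ext (hij.trans h.symm))), mul_zero]
  · rw [hA i j hij, zero_mul]

end CommSemiring

variable {A : Matrix (Fin m) (Fin n) ℝ}

open Polynomial in
theorem nuclearNorm_eq (hA : IsRectDiagonal A) (h0 : ∀ i j, 0 ≤ A i j) :
    nuclearNorm A = ∑ i, ∑ j, A i j := by
  have hchar : (Aᵀ * A).charpoly = ∏ j, (X - C (∑ i, A i j ^ 2)) := by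
    rw [hA.transpose_mul_self, charpoly_diagonal]
  refine ((sum_eigenvalues_eq_of_charpoly_eq _ hchar Real.sqrt).trans ?_).trans sum_comm
  refine sum_congr rfl fun j _ => ?_
  rw [← hA.sq_sum_col, Real.sqrt_sq (sum_nonneg fun i _ => h0 i j)]

theorem mulVec_dotProduct_mulVec_self_le (hA : IsRectDiagonal A) {c : ℝ}
    (h0 : ∀ i j, 0 ≤ A i j) (hc : ∀ i j, A i j ≤ c) (v : Fin n → ℝ) :
    (A *ᵥ v) ⬝ᵥ (A *ᵥ v) ≤ c ^ 2 * (v ⬝ᵥ v) := by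
  refine _root_.mulVec_dotProduct_mulVec_self_le hA.transpose_mul_self (fun j => ?_) v
  -- the column sum `s` satisfies `s ^ 2 ≤ c * s`, hence `s ≤ c`
  have hs : (∑ i, A i j) ^ 2 ≤ c * ∑ i, A i j := by
    rw [hA.sq_sum_col, mul_sum]
    exact sum_le_sum fun i _ => by nlinarith [h0 i j, hc i j]
  have hs0 : 0 ≤ ∑ i, A i j := sum_nonneg fun i _ => h0 i j
  rw [← hA.sq_sum_col]
  nlinarith [sq_nonneg (c - ∑ i, A i j)]

end IsRectDiagonal

def softThreshold (lam s : ℝ) : ℝ := max (s - lam) 0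

section SoftThreshold

variable {lam s : ℝ}

theorem softThreshold_nonneg : 0 ≤ softThreshold lam s := le_max_right _ _

theorem softThreshold_zero (hlam : 0 ≤ lam) : softThreshold lam 0 = 0 :=
  max_eq_right (by linarith)

theorem sub_softThreshold_nonneg (hlam : 0 ≤ lam) (hs : 0 ≤ s) : 0 ≤ s - softThreshold lam s :=
  sub_nonneg.mpr (max_le (by linarith) hs)

theorem sub_softThreshold_le : s - softThreshold lam s ≤ lam :=
  sub_le_comm.mp (le_max_left _ _)

theorem sub_softThreshold_mul_softThreshold :
    (s - softThreshold lam s) * softThreshold lam s = lam * softThreshold lam s := by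
  unfold softThreshold
  rcases le_total (s - lam) 0 with h | h
  · rw [max_eq_right h]; ring
  · rw [max_eq_left h]; ring

end SoftThreshold

theorem objective_le_of_dual_certificate {m n : ℕ} {Y Xh X : Matrix (Fin m) (Fin n) ℝ} {lam : ℝ}
    (hcert : trace ((Y - Xh)ᵀ * Xh) = lam * nuclearNorm Xh)
    (hdual : trace ((Y - Xh)ᵀ * X) ≤ lam * nuclearNorm X) :
    (1 / 2) * (∑ i, ∑ j, (Y i j - Xh i j) ^ 2) + lam * nuclearNorm Xh
      ≤ (1 / 2) * (∑ i, ∑ j, (Y i j - X i j) ^ 2) + lam * nuclearNorm X := by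
  have hpoint (i j) : (Y i j - Xh i j) ^ 2 + 2 * ((Y - Xh) i j * (Xh - X) i j)
      ≤ (Y i j - X i j) ^ 2 := by
    simp only [Matrix.sub_apply]
    nlinarith [sq_nonneg (Xh i j - X i j)]
  have hexp : ∑ i, ∑ j, (Y i j - Xh i j) ^ 2 + 2 * ∑ i, ∑ j, (Y - Xh) i j * (Xh - X) i j
      ≤ ∑ i, ∑ j, (Y i j - X i j) ^ 2 := by
    simp only [mul_sum, ← sum_add_distrib]
    exact sum_le_sum fun i _ => sum_le_sum fun j _ => hpoint i j
  rw [sum_sum_mul_eq_trace_transpose_mul, Matrix.mul_sub, trace_sub] at hexp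
  linarith

theorem stmt_17_general (m n : ℕ) (lam : ℝ) (hlam : 0 < lam)
    (Y S : Matrix (Fin m) (Fin n) ℝ)
    (U : Matrix (Fin m) (Fin m) ℝ) (V : Matrix (Fin n) (Fin n) ℝ)
    (hU' : Uᵀ * U = 1)
    (hV' : Vᵀ * V = 1)
    (hSdiag : ∀ (i : Fin m) (j : Fin n), i.val ≠ j.val → S i j = 0)
    (hS0 : ∀ i j, 0 ≤ S i j)
    (hY : Y = U * S * Vᵀ) :
    ∀ X : Matrix (Fin m) (Fin n) ℝ,
      (1 / 2) * (∑ i, ∑ j, (Y i j - (U * Matrix.of (fun i j => max (S i j - lam) 0) * Vᵀ) i j) ^ 2)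
          + lam * nuclearNorm (U * Matrix.of (fun i j => max (S i j - lam) 0) * Vᵀ)
        ≤ (1 / 2) * (∑ i, ∑ j, (Y i j - X i j) ^ 2) + lam * nuclearNorm X := by
  intro X
  -- `T` is the thresholded matrix `Matrix.of fun i j => max (S i j - lam) 0` of the goal
  set T := S.map (softThreshold lam)
  have hS : IsRectDiagonal S := hSdiag
  have hT : IsRectDiagonal T := hS.map (softThreshold_zero hlam.le)
  have hG : Y - U * T * Vᵀ = U * (S - T) * Vᵀ := by rw [hY, Matrix.mul_sub, Matrix.sub_mul]
  refine objective_le_of_dual_certificate (Xh := U * T * Vᵀ) ?_ ?_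
  · rw [hG, trace_transpose_mul_orthogonal_conj hU' hV', nuclearNorm_orthogonal_conj hU' hV',
      hT.nuclearNorm_eq fun _ _ => softThreshold_nonneg, ← sum_sum_mul_eq_trace_transpose_mul]
    simp only [mul_sum]
    exact sum_congr rfl fun i _ => sum_congr rfl fun j _ => sub_softThreshold_mul_softThreshold
  · rw [hG]
    refine trace_transpose_mul_le_nuclearNorm hlam.le
      (mulVec_dotProduct_mulVec_self_orthogonal_conj_le hU' hV' ?_) X
    exact (hS.sub hT).mulVec_dotProduct_mulVec_self_le
      (fun i j => sub_softThreshold_nonneg hlam.le (hS0 i j)) fun _ _ => sub_softThreshold_le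

theorem stmt_17 (m n : ℕ) (lam : ℝ) (hlam : 0 < lam)
    (Y S : Matrix (Fin m) (Fin n) ℝ)
    (U : Matrix (Fin m) (Fin m) ℝ) (V : Matrix (Fin n) (Fin n) ℝ)
    (hU : U * Uᵀ = 1) (hU' : Uᵀ * U = 1)
    (hV : V * Vᵀ = 1) (hV' : Vᵀ * V = 1)
    (hSdiag : ∀ (i : Fin m) (j : Fin n), i.val ≠ j.val → S i j = 0)
    (hS0 : ∀ i j, 0 ≤ S i j)
    (hY : Y = U * S * Vᵀ) :
    ∀ X : Matrix (Fin m) (Fin n) ℝ,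
      (1 / 2) * (∑ i, ∑ j, (Y i j - (U * Matrix.of (fun i j => max (S i j - lam) 0) * Vᵀ) i j) ^ 2)
          + lam * nuclearNorm (U * Matrix.of (fun i j => max (S i j - lam) 0) * Vᵀ)
        ≤ (1 / 2) * (∑ i, ∑ j, (Y i j - X i j) ^ 2) + lam * nuclearNorm X :=
  stmt_17_general m n lam hlam Y S U V hU' hV' hSdiag hS0 hY
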